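/- Let n ≥ k ≥ 2 be positive integers with k congruent to 2 or 3 modulo 4. Then the following are equivalent: (i) P_{n,k}(1/2) = 0; (ii) P_{n,k} is the zero polynomial; (iii) n ≥ R(k). -/

import Mathlib

open Finset

/-- The k-th diagonal Ramsey number. -/
noncomputable def diagonalRamsey (k : ℕ) : ℕ :=
  sInf {n : ℕ | 0 < n ∧ ∀ G : SimpleGraph (Fin n),
    (∃ s : Finset (Fin n), G.IsNClique k s) ∨ (∃ s : Finset (Fin n), Gᶜ.IsNClique k s)}

/-- The set of `k`-element subsets of `[n]`. -/
def ksubsets (n k : ℕ) : Finset (Finset (Fin n)) :=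
  Finset.powersetCard k (Finset.univ : Finset (Fin n))

/-- The set `A` of assignments `g` associating to each `k`-element subset `S` of `[n]`
a graph on the vertex set `S` (given by its edge set, a set of `2`-element subsets of `S`)
which is neither complete nor empty. -/
def RamseyA (n k : ℕ) : Finset (Finset (Fin n) → Finset (Finset (Fin n))) :=
  Finset.univ.filter fun g =>
    (∀ S ∈ ksubsets n k,
      g S ⊆ Finset.powersetCard 2 S ∧ g S ≠ ∅ ∧ g S ≠ Finset.powersetCard 2 S) ∧
    (∀ S, S ∉ ksubsets n k → g S = ∅)

/-- `Edges(g)`, the union of the edge sets of the graphs `g_S`. -/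
def gEdges (n k : ℕ) (g : Finset (Fin n) → Finset (Finset (Fin n))) :
    Finset (Finset (Fin n)) :=
  (ksubsets n k).biUnion g

/-- The polynomial `P_{n,k}(t) = Σ_{g ∈ A} sign(g) t^{|Edges(g)|}`. -/
noncomputable def Pnk (n k : ℕ) : Polynomial ℤ :=
  ∑ g ∈ RamseyA n k,
    Polynomial.C (∏ S ∈ ksubsets n k, (-1 : ℤ) ^ (g S).card) *
      Polynomial.X ^ (gEdges n k g).card

/-!
For a set `F` of pairs, the signed count of the `g ∈ A` with `Edges(g) ⊆ F` factors over the
`k`-sets `S`. The factor of `S` is the alternating sum of `(-1)^|E|` over the nonempty subsets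
`E ⊆ F ∩ (S choose 2)` other than the complete graph on `S`; since `C(k, 2)` is odd (this is
where `k ≡ 2, 3 mod 4` enters), it is `0` if `S` is monochromatic in the 2-colouring `F` and `-1`
otherwise. Expanding `t^|E| = Σ_{F ⊇ E} t^|F| (1 - t)^(N - |F|)` then writes `±P_{n,k}(t)` as
`Σ_F t^|F| (1 - t)^(N - |F|)` over the colourings `F` without monochromatic `k`-set. So `P_{n,k}`
vanishes iff no such colouring exists, i.e. iff `n ≥ R(k)`, and `±2^N P_{n,k}(1/2)` counts them.
Here `F` ranges over all sets of subsets of `[n]`, of which only the pairs matter, and `N = 2^n`.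
-/

open SimpleGraph

lemma odd_choose_two {k : ℕ} (hk : k % 4 = 2 ∨ k % 4 = 3) : Odd (k.choose 2) := by
  have hmul : k.choose 2 * 2 = k * (k - 1) := by
    rw [Nat.choose_two_right, Nat.div_mul_cancel (Nat.even_mul_pred_self k).two_dvd]
  obtain ⟨m, rfl | rfl⟩ : ∃ m, k = 4 * m + 2 ∨ k = 4 * m + 3 := ⟨k / 4, by omega⟩
  · refine ⟨4 * m * m + 3 * m, ?_⟩
    rw [show 4 * m + 2 - 1 = 4 * m + 1 by omega] at hmul
    linarith
  · refine ⟨4 * m * m + 5 * m + 1, ?_⟩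
    rw [show 4 * m + 3 - 1 = 4 * m + 2 by omega] at hmul
    linarith

lemma sum_powerset_filter_ne_neg_one_pow {α : Type*} [DecidableEq α] {D P : Finset α}
    (hDP : D ⊆ P) (hP : Odd #P) :
    ∑ E ∈ D.powerset with E ≠ ∅ ∧ E ≠ P, (-1 : ℤ) ^ #E =
      if D = ∅ ∨ D = P then 0 else -1 := by
  have hP₀ : P ≠ ∅ := by rintro rfl; simp at hP
  have herase :
      D.powerset.filter (fun E => E ≠ ∅ ∧ E ≠ P) = (D.powerset.erase ∅).erase P := by
    ext E; simp only [mem_filter, mem_erase]; tauto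
  have hsum_erase_empty :
      ∑ E ∈ D.powerset.erase ∅, (-1 : ℤ) ^ #E = (if D = ∅ then 1 else 0) - 1 := by
    rw [Finset.sum_erase_eq_sub (empty_mem_powerset D), sum_powerset_neg_one_pow_card]; simp
  rw [herase]
  by_cases hD : D = P
  · subst hD
    rw [Finset.sum_erase_eq_sub (mem_erase.2 ⟨hP₀, mem_powerset_self D⟩), hsum_erase_empty,
      hP.neg_one_pow]
    simp [hP₀]
  · have hPD : P ∉ D.powerset.erase ∅ := fun h =>
      hD (Subset.antisymm hDP (mem_powerset.1 (mem_of_mem_erase h)))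
    rw [erase_eq_of_notMem hPD, hsum_erase_empty]
    split_ifs <;> simp_all

lemma sum_superset_pow_mul_one_sub_pow {α R : Type*} [DecidableEq α] [CommRing R] (x : R)
    {E W : Finset α} (hEW : E ⊆ W) :
    ∑ F ∈ W.powerset with E ⊆ F, x ^ #F * (1 - x) ^ (#W - #F) = x ^ #E := by
  have himage : W.powerset.filter (E ⊆ ·) = (W \ E).powerset.image (E ∪ ·) := by
    ext F
    simp only [mem_filter, mem_powerset, mem_image]
    constructor
    · rintro ⟨hFW, hEF⟩
      exact ⟨F \ E, sdiff_subset_sdiff hFW Subset.rfl, union_sdiff_of_subset hEF⟩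
    · rintro ⟨D, hD, rfl⟩
      exact ⟨union_subset hEW (hD.trans sdiff_subset), subset_union_left⟩
  have hdisj : ∀ D ∈ (W \ E).powerset, Disjoint E D := fun D hD =>
    disjoint_of_subset_right (mem_powerset.1 hD) disjoint_sdiff
  rw [himage, sum_image fun D hD D' hD' h => by
    rw [← union_sdiff_cancel_left (hdisj D hD), ← union_sdiff_cancel_left (hdisj D' hD'),
      show E ∪ D = E ∪ D' from h]]
  calc ∑ D ∈ (W \ E).powerset, x ^ #(E ∪ D) * (1 - x) ^ (#W - #(E ∪ D))
      = ∑ D ∈ (W \ E).powerset, x ^ #E * (x ^ #D * (1 - x) ^ (#(W \ E) - #D)) := by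
        refine sum_congr rfl fun D hD => ?_
        rw [card_union_of_disjoint (hdisj D hD), card_sdiff_of_subset hEW, pow_add,
          Nat.sub_add_eq, mul_assoc]
    _ = x ^ #E := by rw [← mul_sum, sum_pow_mul_eq_add_pow, add_sub_cancel, one_pow, mul_one]

lemma sum_mul_pow_card_eq_sum_superset {ι β R : Type*} [Fintype β] [DecidableEq β]
    [CommRing R] (s : Finset ι) (w : ι → R) (E : ι → Finset β) (x : R) :
    ∑ i ∈ s, w i * x ^ #(E i) = ∑ F : Finset β,
      (∑ i ∈ s with E i ⊆ F, w i) * (x ^ #F * (1 - x) ^ (Fintype.card β - #F)) := by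
  simp_rw [← sum_superset_pow_mul_one_sub_pow x (subset_univ (E _)), powerset_univ, card_univ,
    mul_sum, sum_filter, sum_mul, ite_mul, zero_mul]
  exact sum_comm

lemma exists_isNClique_or_compl_of_choose_le {V : Type*} [DecidableEq V] (G : SimpleGraph V)
    [DecidableRel G.Adj] (s t : ℕ) (A : Finset V) (hA : (s + t).choose s ≤ #A) :
    (∃ S ⊆ A, G.IsNClique s S) ∨ ∃ S ⊆ A, Gᶜ.IsNClique t S := by
  induction s generalizing t A with
  | zero => exact Or.inl ⟨∅, empty_subset A, by simp⟩
  | succ s ihs =>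
    induction t generalizing A with
    | zero => exact Or.inr ⟨∅, empty_subset A, by simp⟩
    | succ t iht =>
      have hpascal : (s + 1 + (t + 1)).choose (s + 1) =
          (s + (t + 1)).choose s + (s + 1 + t).choose (s + 1) := by
        rw [show s + 1 + (t + 1) = s + t + 1 + 1 by omega, Nat.choose_succ_succ,
          show s + (t + 1) = s + t + 1 by omega, show s + 1 + t = s + t + 1 by omega]
      have hpos := Nat.choose_pos (Nat.le_add_right s (t + 1))
      obtain ⟨v, hv⟩ : A.Nonempty := card_pos.1 (by omega)
      set N := (A.erase v).filter (G.Adj v)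
      set M := (A.erase v).filter (¬G.Adj v ·)
      have hNM : #N + #M = #A - 1 := by
        rw [card_filter_add_card_filter_not, card_erase_of_mem hv]
      have hsub : ∀ {p : V → Prop} [DecidablePred p], (A.erase v).filter p ⊆ A :=
        fun {_ _} => (filter_subset _ _).trans (erase_subset v A)
      obtain hN | hM : (s + (t + 1)).choose s ≤ #N ∨ (s + 1 + t).choose (s + 1) ≤ #M := by
        omega
      · obtain ⟨S, hSN, hS⟩ | ⟨S, hSN, hS⟩ := ihs (t + 1) N hN
        · refine Or.inl ⟨insert v S, insert_subset hv (hSN.trans hsub), ?_⟩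
          exact hS.insert fun b hb => (mem_filter.1 (hSN hb)).2
        · exact Or.inr ⟨S, hSN.trans hsub, hS⟩
      · obtain ⟨S, hSM, hS⟩ | ⟨S, hSM, hS⟩ := iht M hM
        · exact Or.inl ⟨S, hSM.trans hsub, hS⟩
        · refine Or.inr ⟨insert v S, insert_subset hv (hSM.trans hsub),
            hS.insert fun b hb => ?_⟩
          obtain ⟨hbA, hvb⟩ := mem_filter.1 (hSM hb)
          exact (compl_adj G v b).2 ⟨(ne_of_mem_erase hbA).symm, hvb⟩

def IsRamsey (n k : ℕ) : Prop :=
  ∀ G : SimpleGraph (Fin n), ¬G.CliqueFree k ∨ ¬Gᶜ.CliqueFree k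

lemma isRamsey_choose (k : ℕ) : IsRamsey ((k + k).choose k) k := by
  classical
  intro G
  obtain ⟨S, -, hS⟩ | ⟨S, -, hS⟩ :=
    exists_isNClique_or_compl_of_choose_le G k k univ (by rw [card_univ, Fintype.card_fin])
  · exact Or.inl hS.not_cliqueFree
  · exact Or.inr hS.not_cliqueFree

lemma IsRamsey.mono {m n k : ℕ} (hmn : m ≤ n) (hm : IsRamsey m k) : IsRamsey n k := fun G =>
  let e := Embedding.comap (Fin.castLEEmb hmn) G
  (hm _).imp (mt (CliqueFree.comap e.isContained))
    (mt (CliqueFree.comap (Embedding.complEquiv e).isContained))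

lemma not_isRamsey_zero {k : ℕ} (hk : 0 < k) : ¬IsRamsey 0 k := fun h =>
  (h ⊥).elim (· (cliqueFree_of_card_lt hk)) (· (cliqueFree_of_card_lt hk))

lemma diagonalRamsey_eq_sInf {k : ℕ} (hk : 0 < k) :
    diagonalRamsey k = sInf {n | IsRamsey n k} := by
  have hRamsey (n : ℕ) : IsRamsey n k ↔
      ∀ G : SimpleGraph (Fin n), (∃ s, G.IsNClique k s) ∨ ∃ s, Gᶜ.IsNClique k s := by
    simp only [IsRamsey, CliqueFree, not_forall, not_not]
  simp only [diagonalRamsey, ← hRamsey]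
  congr 1
  ext n
  exact and_iff_right_of_imp fun h =>
    Nat.pos_of_ne_zero (by rintro rfl; exact not_isRamsey_zero hk h)

lemma diagonalRamsey_le_iff {n k : ℕ} (hk : 0 < k) : diagonalRamsey k ≤ n ↔ IsRamsey n k := by
  rw [diagonalRamsey_eq_sInf hk]
  have hmem : IsRamsey (sInf {n | IsRamsey n k}) k :=
    Nat.sInf_mem (s := {n | IsRamsey n k}) ⟨_, isRamsey_choose k⟩
  exact ⟨fun h => hmem.mono h, fun h => Nat.sInf_le h⟩

def IsMonochromatic {V : Type*} [DecidableEq V] (F : Finset (Finset V)) (S : Finset V) : Prop :=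
  F ∩ S.powersetCard 2 = ∅ ∨ F ∩ S.powersetCard 2 = S.powersetCard 2

instance {V : Type*} [DecidableEq V] (F : Finset (Finset V)) (S : Finset V) :
    Decidable (IsMonochromatic F S) :=
  inferInstanceAs (Decidable (_ ∨ _))

section PairGraph

variable {V : Type*} [DecidableEq V]

def pairGraph (F : Finset (Finset V)) : SimpleGraph V :=
  SimpleGraph.fromRel fun a b => {a, b} ∈ F

lemma pairGraph_adj {F : Finset (Finset V)} {a b : V} :
    (pairGraph F).Adj a b ↔ a ≠ b ∧ {a, b} ∈ F := by
  simp [pairGraph, pair_comm b a]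

lemma mem_powersetCard_two {S e : Finset V} :
    e ∈ S.powersetCard 2 ↔ ∃ a ∈ S, ∃ b ∈ S, a ≠ b ∧ e = {a, b} := by
  simp only [mem_powersetCard, card_eq_two]
  constructor
  · rintro ⟨hS, a, b, hab, rfl⟩
    exact ⟨a, hS (by simp), b, hS (by simp), hab, rfl⟩
  · rintro ⟨a, ha, b, hb, hab, rfl⟩
    exact ⟨insert_subset ha (singleton_subset_iff.2 hb), a, b, hab, rfl⟩

lemma isClique_pairGraph_iff {F : Finset (Finset V)} {S : Finset V} :
    (pairGraph F).IsClique (S : Set V) ↔ S.powersetCard 2 ⊆ F := by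
  simp only [IsClique, Set.Pairwise, mem_coe, pairGraph_adj, subset_iff, mem_powersetCard_two]
  constructor
  · rintro h e ⟨a, ha, b, hb, hab, rfl⟩
    exact (h ha hb hab).2
  · exact fun h a ha b hb hab => ⟨hab, h ⟨a, ha, b, hb, hab, rfl⟩⟩

lemma isClique_compl_pairGraph_iff {F : Finset (Finset V)} {S : Finset V} :
    (pairGraph F)ᶜ.IsClique (S : Set V) ↔ Disjoint F (S.powersetCard 2) := by
  simp only [IsClique, Set.Pairwise, mem_coe, compl_adj, pairGraph_adj, disjoint_right,
    mem_powersetCard_two]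
  constructor
  · rintro h e ⟨a, ha, b, hb, hab, rfl⟩
    exact fun he => (h ha hb hab).2 ⟨hab, he⟩
  · exact fun h a ha b hb hab => ⟨hab, fun hadj => h ⟨a, ha, b, hb, hab, rfl⟩ hadj.2⟩

lemma isMonochromatic_iff {F : Finset (Finset V)} {S : Finset V} :
    IsMonochromatic F S ↔
      (pairGraph F)ᶜ.IsClique (S : Set V) ∨ (pairGraph F).IsClique (S : Set V) := by
  rw [IsMonochromatic, isClique_compl_pairGraph_iff, isClique_pairGraph_iff,
    disjoint_iff_inter_eq_empty, inter_eq_right]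

lemma exists_pairGraph_eq [Fintype V] (G : SimpleGraph V) :
    ∃ F : Finset (Finset V), pairGraph F = G := by
  classical
  refine ⟨univ.filter fun e => ∀ a ∈ e, ∀ b ∈ e, a ≠ b → G.Adj a b, ?_⟩
  ext a b
  simp only [pairGraph_adj, mem_filter, mem_univ, true_and, mem_insert, mem_singleton]
  constructor
  · exact fun ⟨hab, h⟩ => h a (Or.inl rfl) b (Or.inr rfl) hab
  · intro h
    refine ⟨h.ne, ?_⟩
    rintro x (rfl | rfl) y (rfl | rfl) hxy
    exacts [absurd rfl hxy, h, h.symm, absurd rfl hxy]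

end PairGraph

def monochromaticFreeColorings (n k : ℕ) : Finset (Finset (Finset (Fin n))) :=
  univ.filter fun F => ∀ S ∈ ksubsets n k, ¬IsMonochromatic F S

lemma exists_isMonochromatic_iff {n k : ℕ} (F : Finset (Finset (Fin n))) :
    (∃ S ∈ ksubsets n k, IsMonochromatic F S) ↔
      ¬(pairGraph F).CliqueFree k ∨ ¬(pairGraph F)ᶜ.CliqueFree k := by
  simp only [CliqueFree, not_forall, not_not, isNClique_iff, ksubsets, mem_powersetCard,
    subset_univ, true_and, isMonochromatic_iff]
  constructor
  · rintro ⟨S, hS, h | h⟩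
    exacts [Or.inr ⟨S, h, hS⟩, Or.inl ⟨S, h, hS⟩]
  · rintro (⟨S, h, hS⟩ | ⟨S, h, hS⟩)
    exacts [⟨S, hS, Or.inr h⟩, ⟨S, hS, Or.inl h⟩]

lemma monochromaticFreeColorings_eq_empty_iff {n k : ℕ} :
    monochromaticFreeColorings n k = ∅ ↔ IsRamsey n k := by
  simp only [monochromaticFreeColorings, filter_eq_empty_iff, mem_univ, true_implies, not_forall,
    not_not, exists_prop, exists_isMonochromatic_iff]
  refine ⟨fun h G => ?_, fun h F => h _⟩
  obtain ⟨F, rfl⟩ := exists_pairGraph_eq G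
  exact @h F

def ramseySign (n k : ℕ) (g : Finset (Fin n) → Finset (Finset (Fin n))) : ℤ :=
  ∏ S ∈ ksubsets n k, (-1 : ℤ) ^ #(g S)

-- `{∅}` off the `k`-sets makes `{g ∈ A | Edges(g) ⊆ F}` the product of these sets.
def localChoices (n k : ℕ) (F : Finset (Finset (Fin n))) (S : Finset (Fin n)) :
    Finset (Finset (Finset (Fin n))) :=
  if S ∈ ksubsets n k then
    (F ∩ S.powersetCard 2).powerset.filter fun E => E ≠ ∅ ∧ E ≠ S.powersetCard 2
  else {∅}

lemma filter_gEdges_subset_RamseyA (n k : ℕ) (F : Finset (Finset (Fin n))) :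
    (RamseyA n k).filter (gEdges n k · ⊆ F) = Fintype.piFinset (localChoices n k F) := by
  ext g
  simp only [RamseyA, gEdges, mem_filter, mem_univ, true_and, biUnion_subset,
    Fintype.mem_piFinset, localChoices]
  constructor
  · rintro ⟨⟨hA, hA'⟩, hF⟩ S
    split_ifs with hS
    · obtain ⟨hP, hne, hne'⟩ := hA S hS
      exact mem_filter.2 ⟨mem_powerset.2 (subset_inter (hF S hS) hP), hne, hne'⟩
    · simp [hA' S hS]
  · intro h
    refine ⟨⟨fun S hS => ?_, fun S hS => ?_⟩, fun S hS => ?_⟩ <;> specialize h S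
    · rw [if_pos hS, mem_filter, mem_powerset, subset_inter_iff] at h
      exact ⟨h.1.2, h.2⟩
    · rwa [if_neg hS, mem_singleton] at h
    · rw [if_pos hS, mem_filter, mem_powerset, subset_inter_iff] at h
      exact h.1.1

lemma sum_ramseySign_filter_gEdges_subset {n k : ℕ} (hk : Odd (k.choose 2))
    (F : Finset (Finset (Fin n))) :
    ∑ g ∈ RamseyA n k with gEdges n k g ⊆ F, ramseySign n k g =
      if F ∈ monochromaticFreeColorings n k then (-1) ^ #(ksubsets n k) else 0 := by
  have hsign : ∀ g ∈ Fintype.piFinset (localChoices n k F),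
      ramseySign n k g = ∏ S, (-1 : ℤ) ^ #(g S) := fun g hg =>
    prod_subset (subset_univ _) fun S _ hS => by
      rw [show g S = ∅ by simpa [localChoices, hS] using Fintype.mem_piFinset.1 hg S, card_empty,
        pow_zero]
  rw [filter_gEdges_subset_RamseyA, sum_congr rfl hsign,
    ← prod_univ_sum (localChoices n k F) fun _ E => (-1 : ℤ) ^ #E,
    ← prod_subset (subset_univ (ksubsets n k)) fun S _ hS => by simp [localChoices, hS]]
  have hlocal : ∀ S ∈ ksubsets n k, ∑ E ∈ localChoices n k F S, (-1 : ℤ) ^ #E =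
      if ¬IsMonochromatic F S then -1 else 0 := fun S hS => by
    have hP : #(S.powersetCard 2) = k.choose 2 := by
      rw [card_powersetCard, (mem_powersetCard.1 hS).2]
    rw [localChoices, if_pos hS,
      sum_powerset_filter_ne_neg_one_pow inter_subset_right (hP ▸ hk), ite_not]
    rfl
  rw [prod_congr rfl hlocal, prod_ite_zero, prod_const]
  simp [monochromaticFreeColorings]

open Polynomial in
lemma Pnk_eq_sum_monochromaticFreeColorings {n k : ℕ} (hk : Odd (k.choose 2)) :
    Pnk n k = ∑ F ∈ monochromaticFreeColorings n k, C ((-1) ^ #(ksubsets n k)) *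
      (X ^ #F * (1 - X) ^ (Fintype.card (Finset (Fin n)) - #F)) := by
  rw [show Pnk n k = ∑ g ∈ RamseyA n k, C (ramseySign n k g) * X ^ #(gEdges n k g) from rfl,
    sum_mul_pow_card_eq_sum_superset]
  simp only [← map_sum, sum_ramseySign_filter_gEdges_subset hk, apply_ite C, map_zero, ite_mul,
    zero_mul, sum_ite_mem, univ_inter]

lemma aeval_half_Pnk {n k : ℕ} (hk : Odd (k.choose 2)) :
    Polynomial.aeval ((1 : ℝ) / 2) (Pnk n k) =
      (-1) ^ #(ksubsets n k) * #(monochromaticFreeColorings n k) *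
        (1 / 2) ^ Fintype.card (Finset (Fin n)) := by
  have hterm : ∀ F : Finset (Finset (Fin n)),
      Polynomial.aeval ((1 : ℝ) / 2) (Polynomial.C ((-1) ^ #(ksubsets n k)) *
        (Polynomial.X ^ #F * (1 - Polynomial.X) ^ (Fintype.card (Finset (Fin n)) - #F))) =
      (-1) ^ #(ksubsets n k) * (1 / 2) ^ Fintype.card (Finset (Fin n)) := fun F => by
    simp only [map_mul, map_pow, map_sub, map_one, map_neg, Polynomial.aeval_X]
    rw [show (1 : ℝ) - 1 / 2 = 1 / 2 by norm_num, ← pow_add,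
      Nat.add_sub_cancel' (card_le_univ F)]
  rw [Pnk_eq_sum_monochromaticFreeColorings hk, map_sum, sum_congr rfl fun F _ => hterm F,
    sum_const, nsmul_eq_mul]
  ring

lemma aeval_half_Pnk_eq_zero_iff {n k : ℕ} (hk : Odd (k.choose 2)) :
    Polynomial.aeval ((1 : ℝ) / 2) (Pnk n k) = 0 ↔ monochromaticFreeColorings n k = ∅ := by
  rw [aeval_half_Pnk hk]
  simp

lemma Pnk_eq_zero_iff {n k : ℕ} (hk : Odd (k.choose 2)) :
    Pnk n k = 0 ↔ monochromaticFreeColorings n k = ∅ := by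
  refine ⟨fun h => (aeval_half_Pnk_eq_zero_iff hk).1 (by rw [h, map_zero]), fun h => ?_⟩
  rw [Pnk_eq_sum_monochromaticFreeColorings hk, h, sum_empty]

theorem stmt_8_general (n k : ℕ) (hk : 2 ≤ k) (hkmod : k % 4 = 2 ∨ k % 4 = 3) :
    (Polynomial.aeval ((1 : ℝ) / 2) (Pnk n k) = 0 ↔ Pnk n k = 0) ∧
      (Pnk n k = 0 ↔ diagonalRamsey k ≤ n) := by
  have hodd := odd_choose_two hkmod
  rw [aeval_half_Pnk_eq_zero_iff hodd, Pnk_eq_zero_iff hodd, diagonalRamsey_le_iff (by omega),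
    monochromaticFreeColorings_eq_empty_iff]
  exact ⟨Iff.rfl, Iff.rfl⟩

theorem stmt_8 (n k : ℕ) (hk : 2 ≤ k) (hkn : k ≤ n)
    (hkmod : k % 4 = 2 ∨ k % 4 = 3) :
    (Polynomial.aeval ((1 : ℝ) / 2) (Pnk n k) = 0 ↔ Pnk n k = 0) ∧
      (Pnk n k = 0 ↔ diagonalRamsey k ≤ n) :=
  stmt_8_general n k hk hkmod
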